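/- arXiv:2011.03679 — 3 statements merged into one kernel-verified Lean document; each statement's English description precedes it below -/
import Mathlib

section
/- A complete atomic lattice L is a lattice with lower semicomplements if and only if its greatest element is the join of all its atoms. Here 'lattice with lower semicomplements' means: for every x ∈ L with x ≠ ⊤ there exists y ∈ L with y ≠ ⊥ and x ⊓ y = ⊥. -/
/-- A complete atomic lattice is a lattice with lower semicomplements if and only if
its greatest element is the join of all its atoms. -/
theorem lower_semicomplements_iff_top_eq_sSup_atoms {L : Type*} [CompleteLattice L]
    [IsAtomic L] :
    (∀ x : L, x ≠ ⊤ → ∃ y : L, y ≠ ⊥ ∧ x ⊓ y = ⊥) ↔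
      (⊤ : L) = sSup {a : L | IsAtom a} := by
  constructor
  · intro h
    by_contra hne
    obtain ⟨y, hy, hxy⟩ := h _ (Ne.symm hne)
    obtain ⟨a, ha, hay⟩ := (IsAtomic.eq_bot_or_exists_atom_le y).resolve_left hy
    have has : a ≤ sSup {a : L | IsAtom a} := le_sSup ha
    exact ha.1 (le_antisymm (hxy ▸ le_inf has hay) bot_le)
  · intro htop x hx
    by_cases hall : ∀ a : L, IsAtom a → a ≤ x
    · exact absurd (top_le_iff.mp (htop ▸ sSup_le hall)) hx
    · push_neg at hall
      obtain ⟨a, ha, hax⟩ := hall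
      refine ⟨a, ha.1, ?_⟩
      rcases (ha.le_iff.mp inf_le_right) with h | h
      · exact h
      · exact absurd (h ▸ inf_le_left) hax
end

section
/- Let n ≥ 2 and let π be a non-identity permutation of {1,…,n}. If a monoid M satisfies the permutation identity x₁x₂⋯xₙ = x_{π(1)}x_{π(2)}⋯x_{π(n)} for all x₁,…,xₙ ∈ M, then M is commutative. -/
/-!
Since `π ≠ 1`, it has an inversion: positions `s < t` with `π t < π s`. Assign `a` to the variable
in position `π t`, `b` to the one in position `π s` and `1` to all others. The left-hand side of
the identity then collapses to `a * b` and the right-hand side to `b * a`.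
-/

namespace List

variable {M : Type*} [Monoid M]

theorem prod_ofFn_eq_single {n : ℕ} {f : Fin n → M} (i : Fin n) (hf : ∀ j, j ≠ i → f j = 1) :
    (ofFn f).prod = f i := by
  induction n with
  | zero => exact i.elim0
  | succ n ih =>
    rw [ofFn_succ, prod_cons]
    induction i using Fin.cases with
    | zero =>
      rw [prod_eq_one, mul_one]
      simpa [mem_ofFn] using fun j => hf j.succ (Fin.succ_ne_zero j)
    | succ i =>
      rw [hf 0 (Fin.succ_ne_zero i).symm, one_mul]
      exact ih i fun j hj => hf j.succ (Fin.succ_injective _ |>.ne hj)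

theorem prod_ofFn_eq_mul {n : ℕ} {f : Fin n → M} {i j : Fin n} (hij : i < j)
    (hf : ∀ k, k ≠ i → k ≠ j → f k = 1) : (ofFn f).prod = f i * f j := by
  induction n with
  | zero => exact i.elim0
  | succ n ih =>
    obtain ⟨j, rfl⟩ := Fin.exists_succ_eq.mpr (Fin.pos_iff_ne_zero.mp (i.zero_le.trans_lt hij))
    rw [ofFn_succ, prod_cons]
    induction i using Fin.cases with
    | zero =>
      congr 1
      exact prod_ofFn_eq_single j fun k hk => hf k.succ (Fin.succ_ne_zero k)
        (Fin.succ_injective _ |>.ne hk)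
    | succ i =>
      rw [hf 0 (Fin.succ_ne_zero i).symm (Fin.succ_ne_zero j).symm, one_mul]
      exact ih (Fin.succ_lt_succ_iff.mp hij) fun k hki hkj =>
        hf k.succ (Fin.succ_injective _ |>.ne hki) (Fin.succ_injective _ |>.ne hkj)

end List

theorem Equiv.Perm.exists_lt_and_lt_of_ne_one {α : Type*} [LinearOrder α] [WellFoundedLT α]
    {σ : Equiv.Perm α} (hσ : σ ≠ 1) : ∃ i j, i < j ∧ σ j < σ i := by
  by_contra! hmono
  have hσ_mono : StrictMono σ := Monotone.strictMono_of_injective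
    (fun i j hij => hij.eq_or_lt.elim (fun h => h ▸ le_rfl) (hmono i j)) σ.injective
  refine hσ (Equiv.ext fun i => congrFun ((hσ_mono.range_inj strictMono_id).mp ?_) i)
  rw [σ.range_eq_univ, Set.range_id]

theorem perm_identity_implies_commutative_general {M : Type*} [Monoid M]
    (n : ℕ) (π : Equiv.Perm (Fin n)) (hπ : π ≠ 1)
    (h : ∀ f : Fin n → M, (List.ofFn f).prod = (List.ofFn (fun i => f (π i))).prod) :
    ∀ a b : M, a * b = b * a := by
  intro a b
  obtain ⟨s, t, hst, hts⟩ := π.exists_lt_and_lt_of_ne_one hπ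
  let f : Fin n → M := fun k => if k = π t then a else if k = π s then b else 1
  have hfs : f (π s) = b := by simp [f, hts.ne']
  have hft : f (π t) = a := by simp [f]
  calc a * b = (List.ofFn f).prod := by
        rw [List.prod_ofFn_eq_mul hts fun k hkt hks => by simp [f, hkt, hks], hft, hfs]
    _ = (List.ofFn fun i => f (π i)).prod := h f
    _ = b * a := by
        rw [List.prod_ofFn_eq_mul hst fun k hks hkt => by simp [f, hkt, hks], hft, hfs]

/-- If a monoid satisfies a permutation identity
`x₁x₂⋯xₙ ≈ x_{π(1)}x_{π(2)}⋯x_{π(n)}` for some `n ≥ 2` and a non-identity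
permutation `π`, then it is commutative. -/
theorem perm_identity_implies_commutative {M : Type*} [Monoid M]
    (n : ℕ) (hn : 2 ≤ n) (π : Equiv.Perm (Fin n)) (hπ : π ≠ 1)
    (h : ∀ f : Fin n → M, (List.ofFn f).prod = (List.ofFn (fun i => f (π i))).prod) :
    ∀ a b : M, a * b = b * a :=
  perm_identity_implies_commutative_general n π hπ h
end

section
/- Let s and u be words in a free monoid, and let ξ be a monoid endomorphism of the free monoid. Suppose that (i) every letter occurring in s occurs in s at least twice, (ii) ξ(s) is a factor (contiguous subword) of u, and (iii) every factor of u of length at least 2 occurs at most once in u (i.e., has at most one occurrence as a factor of u). Then for every letter a occurring in s, the word ξ(a) has length at most 1 (it is either the empty word or a single letter). -/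
lemma two_occ_decomp {α : Type*} [DecidableEq α] {a : α} {l : List α}
    (h : 2 ≤ l.count a) : ∃ x y z, l = x ++ a :: (y ++ a :: z) := by
  have hmem : a ∈ l := List.count_pos_iff.mp (by omega)
  obtain ⟨x, t, rfl⟩ := List.append_of_mem hmem
  rw [List.count_append, List.count_cons_self] at h
  have : 0 < x.count a ∨ 0 < t.count a := by omega
  rcases this with h' | h'
  · obtain ⟨x₁, x₂, rfl⟩ := List.append_of_mem (List.count_pos_iff.mp h')
    exact ⟨x₁, x₂, t, by simp⟩
  · obtain ⟨y, z, rfl⟩ := List.append_of_mem (List.count_pos_iff.mp h')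
    exact ⟨x, y, z, rfl⟩

/-- Let `s`, `u` be words in a free monoid and `ξ` a monoid endomorphism of the free
monoid. If every letter occurring in `s` occurs in `s` at least twice, `ξ s` is a
factor of `u`, and every factor of `u` of length at least 2 occurs at most once in
`u`, then for every letter `a` occurring in `s` the word `ξ (of a)` has length at
most 1. -/
theorem image_of_letter_short {X : Type} [DecidableEq X]
    (s u : FreeMonoid X) (ξ : FreeMonoid X →* FreeMonoid X)
    (hmult : ∀ a ∈ FreeMonoid.toList s, 2 ≤ (FreeMonoid.toList s).count a)
    (hfactor : ∃ p r : FreeMonoid X, u = p * ξ s * r)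
    (huniq : ∀ w p₁ r₁ p₂ r₂ : FreeMonoid X, 2 ≤ (FreeMonoid.toList w).length →
      u = p₁ * w * r₁ → u = p₂ * w * r₂ → p₁ = p₂) :
    ∀ a ∈ FreeMonoid.toList s, (FreeMonoid.toList (ξ (FreeMonoid.of a))).length ≤ 1 := by
  intro a ha
  by_contra hlen
  push_neg at hlen
  obtain ⟨x, y, z, hl⟩ := two_occ_decomp (hmult a ha)
  have hs : s = FreeMonoid.ofList x * FreeMonoid.of a * FreeMonoid.ofList y *
      FreeMonoid.of a * FreeMonoid.ofList z := by
    rw [← FreeMonoid.ofList_toList s, hl]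
    have h' : x ++ a :: (y ++ a :: z) = x ++ [a] ++ y ++ [a] ++ z := by simp
    rw [h', FreeMonoid.ofList_append, FreeMonoid.ofList_append, FreeMonoid.ofList_append,
      FreeMonoid.ofList_append, FreeMonoid.ofList_singleton]
  obtain ⟨p, r, hu⟩ := hfactor
  rw [hs, map_mul, map_mul, map_mul, map_mul] at hu
  set A := ξ (FreeMonoid.ofList x)
  set B := ξ (FreeMonoid.of a)
  set C := ξ (FreeMonoid.ofList y)
  set E := ξ (FreeMonoid.ofList z)
  have h1 : u = (p * A) * B * (C * B * E * r) := by
    rw [hu]; simp [mul_assoc]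
  have h2 : u = (p * A * B * C) * B * (E * r) := by
    rw [hu]; simp [mul_assoc]
  have := huniq B (p * A) (C * B * E * r) (p * A * B * C) (E * r) (by omega) h1 h2
  have hL := congrArg (fun w => (FreeMonoid.toList w).length) this
  simp only [FreeMonoid.toList_mul, List.length_append] at hL
  omega
end
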